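/- arXiv:math/9812133 — 10 statements merged into one kernel-verified Lean document; each statement's English description precedes it below -/
import Mathlib

section
/- Let 𝒰 be a countably complete filter of closed subsets of X generated by at most ℵ₁ sets, and suppose Y ⊆ X is 𝒰-large (meets every member of 𝒰). Then Y has a subset Z that diagonalizes 𝒰, i.e., Z is 𝒰-large and Z \ A is countable for every A ∈ 𝒰. -/
open Set

/-- if `𝒰` is a countably complete filter of closed sets generated by at most
`ℵ₁` sets and `Y` is `𝒰`-large, then some `Z ⊆ Y` diagonalizes `𝒰`. -/
theorem stmt2 {X : Type*} [TopologicalSpace X] (𝒰 : Set (Set X))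
    (hne : 𝒰.Nonempty)
    (hcl : ∀ A ∈ 𝒰, IsClosed A ∧ A.Nonempty)
    (hinter : ∀ A ∈ 𝒰, ∀ B ∈ 𝒰, A ∩ B ∈ 𝒰)
    (hsup : ∀ A ∈ 𝒰, ∀ B : Set X, IsClosed B → A ⊆ B → B ∈ 𝒰)
    (hcc : ∀ A : ℕ → Set X, (∀ n, A n ∈ 𝒰) → (⋂ n, A n) ∈ 𝒰)
    (hgen : ∃ G ⊆ 𝒰, Cardinal.mk G ≤ Cardinal.aleph 1 ∧ ∀ A ∈ 𝒰, ∃ B ∈ G, B ⊆ A)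
    (Y : Set X) (hY : ∀ A ∈ 𝒰, (Y ∩ A).Nonempty) :
    ∃ Z ⊆ Y, (∀ A ∈ 𝒰, (Z ∩ A).Nonempty) ∧ ∀ A ∈ 𝒰, (Z \ A).Countable := by
  classical
  obtain ⟨G, hG𝒰, hGcard, hGcof⟩ := hgen
  -- G is nonempty
  obtain ⟨A₀, hA₀⟩ := hne
  obtain ⟨B₀, hB₀G, -⟩ := hGcof A₀ hA₀
  haveI : Nonempty G := ⟨⟨B₀, hB₀G⟩⟩
  -- index type of cardinality ℵ₁
  set I := (Cardinal.aleph 1).ord.ToType with hI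
  have hmkI : Cardinal.mk I = Cardinal.aleph 1 := by
    rw [hI, Cardinal.mk_toType, Cardinal.card_ord]
  -- a surjection from I onto G
  have hle : Cardinal.mk G ≤ Cardinal.mk I := by rw [hmkI]; exact hGcard
  obtain ⟨e⟩ := Cardinal.le_def _ _ |>.1 hle
  set g : I → Set X := fun i => ((Function.invFun e i : G) : Set X) with hg
  have hgsurj : ∀ B ∈ G, ∃ i : I, g i = B := by
    intro B hB
    obtain ⟨i, hi⟩ := Function.invFun_surjective e.injective ⟨B, hB⟩
    exact ⟨i, by rw [hg]; simp [hi]⟩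
  have hgG : ∀ i : I, g i ∈ G := fun i => (Function.invFun e i).2
  -- initial segments of I are countable
  have hIio : ∀ i : I, (Set.Iio i).Countable := fun i =>
    (Cardinal.countable_iff_lt_aleph_one _).2 (Cardinal.mk_Iio_ord_toType i)
  have hIic : ∀ i : I, (Set.Iic i).Countable := by
    intro i
    have : Set.Iic i = Set.Iio i ∪ {i} := by
      ext x; simp [le_iff_lt_or_eq]
    rw [this]; exact (hIio i).union (countable_singleton i)
  -- the decreasing intersections
  set A : I → Set X := fun i => ⋂ j ∈ Set.Iic i, g j with hA
  have hAU : ∀ i : I, A i ∈ 𝒰 := by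
    intro i
    have hS : (g '' Set.Iic i).Countable := (hIic i).image g
    have hSne : (g '' Set.Iic i).Nonempty := ⟨g i, ⟨i, le_refl i, rfl⟩⟩
    obtain ⟨f, hf⟩ := hS.exists_eq_range hSne
    have hfU : ∀ n, f n ∈ 𝒰 := by
      intro n
      have : f n ∈ g '' Set.Iic i := hf ▸ Set.mem_range_self n
      obtain ⟨j, -, hj⟩ := this
      rw [← hj]
      exact hG𝒰 (hgG j)
    have : (⋂ n, f n) = A i := by
      rw [hA]
      rw [← Set.sInter_range f, ← hf, Set.sInter_image]
    exact this ▸ hcc f hfU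
  -- choose points of Y in each A i
  have hz : ∀ i : I, ∃ x, x ∈ Y ∩ A i := fun i => hY (A i) (hAU i)
  choose z hzmem using hz
  refine ⟨Set.range z, ?_, ?_, ?_⟩
  · rintro x ⟨i, rfl⟩; exact (hzmem i).1
  · intro B hB
    obtain ⟨C, hCG, hCB⟩ := hGcof B hB
    obtain ⟨i, hi⟩ := hgsurj C hCG
    refine ⟨z i, Set.mem_range_self i, hCB ?_⟩
    rw [← hi]
    exact Set.mem_iInter₂.1 (hzmem i).2 i (le_refl i)
  · intro B hB
    obtain ⟨C, hCG, hCB⟩ := hGcof B hB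
    obtain ⟨i, hi⟩ := hgsurj C hCG
    have hsub : Set.range z \ B ⊆ z '' Set.Iio i := by
      rintro x ⟨⟨j, rfl⟩, hxB⟩
      refine ⟨j, ?_, rfl⟩
      by_contra h
      simp only [Set.mem_Iio, not_lt] at h
      exact hxB (hCB (hi ▸ Set.mem_iInter₂.1 (hzmem j).2 i h))
    exact ((hIio i).image z).mono hsub
end

section
/- Every first countable regular topological space X with Lindelöf number ℓ(X) < 𝔟 satisfies Property D: every countable closed discrete subset of X expands to a discrete collection of open sets. -/
open Set

/-- `f` is eventually dominated by `g`. -/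
def DominatedBy (f g : ℕ → ℕ) : Prop := ∀ᶠ n in Filter.atTop, f n ≤ g n

/-- The bounding number `𝔟`: the least cardinality of a family of functions `ω → ω`
unbounded in the eventual domination order. -/
noncomputable def boundingNumber : Cardinal :=
  sInf {c : Cardinal | ∃ F : Set (ℕ → ℕ), Cardinal.mk F = c ∧
    ∀ g : ℕ → ℕ, ∃ f ∈ F, ¬ DominatedBy f g}

/-- The Lindelöf number `ℓ(X)`: the least infinite cardinal `κ` such that every open cover
of `X` has a subcover of size at most `κ`. -/
noncomputable def lindelofNumber (X : Type u) [TopologicalSpace X] : Cardinal.{u} :=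
  sInf {κ : Cardinal | Cardinal.aleph0 ≤ κ ∧
    ∀ S : Set (Set X), (∀ U ∈ S, IsOpen U) → ⋃₀ S = Set.univ →
      ∃ T ⊆ S, Cardinal.mk T ≤ κ ∧ ⋃₀ T = Set.univ}

open Topology in
/-- A closure-decreasing open neighborhood basis at a point, inside a given open set. -/
lemma nbhd_base {X : Type u} [TopologicalSpace X] [FirstCountableTopology X] [RegularSpace X]
    (z : X) (U : Set X) (hU : IsOpen U) (hz : z ∈ U) :
    ∃ B : ℕ → Set X, (∀ k, IsOpen (B k)) ∧ (∀ k, z ∈ B k) ∧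
      (∀ k, closure (B (k+1)) ⊆ B k) ∧ B 0 ⊆ U ∧
      (∀ W : Set X, IsOpen W → z ∈ W → ∃ k, B k ⊆ W) := by
  obtain ⟨b, hb⟩ := (𝓝 z).exists_antitone_basis
  have shrink : ∀ (V : Set X), IsOpen V → z ∈ V →
      ∃ O : Set X, IsOpen O ∧ z ∈ O ∧ closure O ⊆ V := by
    intro V hV hzV
    rcases exists_mem_nhds_isClosed_subset (hV.mem_nhds hzV) with ⟨C, hC, hCc, hCU⟩
    exact ⟨interior C, isOpen_interior, mem_interior_iff_mem_nhds.2 hC,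
      (closure_minimal interior_subset hCc).trans hCU⟩
  have step : ∀ (k : ℕ) (s : {s : Set X // IsOpen s ∧ z ∈ s}),
      ∃ t : {s : Set X // IsOpen s ∧ z ∈ s}, closure t.1 ⊆ s.1 ∩ interior (b k) := by
    intro k s
    have hzb : z ∈ interior (b k) := mem_interior_iff_mem_nhds.2 (hb.1.mem_of_mem trivial)
    obtain ⟨O, hO, hzO, hOc⟩ := shrink (s.1 ∩ interior (b k))
      (s.2.1.inter isOpen_interior) ⟨s.2.2, hzb⟩
    exact ⟨⟨O, hO, hzO⟩, hOc⟩
  choose st hst using step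
  set B : ℕ → {s : Set X // IsOpen s ∧ z ∈ s} := fun k => Nat.rec ⟨U, hU, hz⟩ st k with hB
  have hsucc : ∀ k, B (k+1) = st k (B k) := fun k => rfl
  refine ⟨fun k => (B k).1, fun k => (B k).2.1, fun k => (B k).2.2, ?_, ?_, ?_⟩
  · intro k
    show closure (B (k+1)).1 ⊆ (B k).1
    rw [hsucc k]
    exact (hst k (B k)).trans inter_subset_left
  · exact subset_rfl
  · intro W hW hzW
    obtain ⟨k, -, hk⟩ := hb.1.mem_iff.1 (hW.mem_nhds hzW)
    refine ⟨k+1, ?_⟩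
    show (B (k+1)).1 ⊆ W
    rw [hsucc k]
    exact subset_closure.trans ((hst k (B k)).trans (inter_subset_right.trans
      (interior_subset.trans hk)))

/-- every first countable regular space with Lindelöf number `< 𝔟`
satisfies Property D: every countable closed discrete subset expands to a discrete
collection of open sets. -/
theorem stmt4 {X : Type u} [TopologicalSpace X]
    [FirstCountableTopology X] [RegularSpace X] [T1Space X]
    (hb : lindelofNumber X < Cardinal.lift.{u} boundingNumber)
    (x : ℕ → X) (hinj : Function.Injective x)
    (hclosed : IsClosed (Set.range x))
    (hdisc : ∀ n, ∃ U : Set X, IsOpen U ∧ x n ∈ U ∧ ∀ m, x m ∈ U → m = n) :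
    ∃ V : ℕ → Set X, (∀ n, IsOpen (V n) ∧ x n ∈ V n) ∧
      ∀ y : X, ∃ W : Set X, IsOpen W ∧ y ∈ W ∧
        {n : ℕ | (W ∩ V n).Nonempty}.Subsingleton := by
  classical
  -- discrete neighborhoods of the points
  choose U hUopen hUmem hUonly using hdisc
  -- closure-decreasing bases at each point
  choose B hBopen hBmem hBcl hBU hBbasis using fun n => nbhd_base (x n) (U n)
    (hUopen n) (hUmem n)
  -- monotonicity of the bases
  have hmono : ∀ n, Antitone (B n) := fun n =>
    antitone_nat_of_succ_le (fun k => subset_closure.trans (hBcl n k))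
  -- only x n can lie in closure (B n (k+1))
  have hkey : ∀ n k m, x m ∈ closure (B n (k+1)) → m = n := by
    intro n k m hm
    exact hUonly n m (hBU n ((hmono n (Nat.zero_le k)) ((hBcl n k) hm)))
  -- the cover by open sets whose closure meets the range in at most one point
  set C : Set (Set X) := {W : Set X | IsOpen W ∧ {n : ℕ | x n ∈ closure W}.Subsingleton}
    with hC
  have hCopen : ∀ W ∈ C, IsOpen W := fun W hW => hW.1
  have hCcov : ⋃₀ C = Set.univ := by
    refine eq_univ_of_forall fun y => ?_
    by_cases hy : y ∈ Set.range x
    · obtain ⟨n, rfl⟩ := hy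
      rcases exists_mem_nhds_isClosed_subset ((hUopen n).mem_nhds (hUmem n)) with
        ⟨Cl, hCl, hClc, hClU⟩
      refine ⟨interior Cl, ⟨isOpen_interior, fun a ha b hb => ?_⟩,
        mem_interior_iff_mem_nhds.2 hCl⟩
      have ha' : x a ∈ U n := hClU (closure_minimal interior_subset hClc ha)
      have hb' : x b ∈ U n := hClU (closure_minimal interior_subset hClc hb)
      rw [hUonly n a ha', hUonly n b hb']
    · rcases exists_mem_nhds_isClosed_subset
        ((hclosed.isOpen_compl).mem_nhds hy) with ⟨Cl, hCl, hClc, hClU⟩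
      refine ⟨interior Cl, ⟨isOpen_interior, fun a ha b hb => absurd ?_ (hClU
        (closure_minimal interior_subset hClc ha))⟩, mem_interior_iff_mem_nhds.2 hCl⟩
      exact Set.mem_range_self a
  -- ℓ(X) belongs to the defining set
  have hlin : lindelofNumber X ∈ {κ : Cardinal | Cardinal.aleph0 ≤ κ ∧
      ∀ S : Set (Set X), (∀ U ∈ S, IsOpen U) → ⋃₀ S = Set.univ →
      ∃ T ⊆ S, Cardinal.mk T ≤ κ ∧ ⋃₀ T = Set.univ} := by
    apply csInf_mem
    refine ⟨Cardinal.aleph0 ⊔ Cardinal.mk (Set X), le_sup_left, fun S hS hScov => ?_⟩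
    exact ⟨S, subset_rfl, le_sup_of_le_right (Cardinal.mk_set_le S), hScov⟩
  obtain ⟨T, hTsub, hTcard, hTcov⟩ := hlin.2 C hCopen hCcov
  -- the functions associated to the cover elements
  set f : Set X → ℕ → ℕ := fun W n =>
    if h : ∃ k, B n k ∩ W = ∅ then Nat.find h else 0 with hf
  set F : Set (ℕ → ℕ) := Set.range (fun (W : T) => f W.1) with hFdef
  -- the family F is bounded
  have hbound : ∃ g : ℕ → ℕ, ∀ fm ∈ F, DominatedBy fm g := by
    by_contra h
    push_neg at h
    have hmem : Cardinal.mk F ∈ {c : Cardinal | ∃ F : Set (ℕ → ℕ), Cardinal.mk F = c ∧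
        ∀ g : ℕ → ℕ, ∃ f ∈ F, ¬ DominatedBy f g} := ⟨F, rfl, h⟩
    have h1 : boundingNumber ≤ Cardinal.mk F := csInf_le' hmem
    have h2 : Cardinal.lift.{u} (Cardinal.mk F) ≤ Cardinal.mk T := by
      have := Cardinal.mk_range_le_lift (f := fun (W : T) => f W.1)
      rwa [Cardinal.lift_uzero] at this
    exact absurd ((Cardinal.lift_le.2 h1).trans (h2.trans hTcard)) (not_le_of_gt hb)
  obtain ⟨g, hg⟩ := hbound
  -- the expansion
  set V : ℕ → Set X := fun n =>
    B n (g n + 3) \ ⋃ m ∈ Finset.range n, closure (B m (g m + 2)) with hV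
  have hVopen : ∀ n, IsOpen (V n) := by
    intro n
    apply (hBopen n _).sdiff
    exact isClosed_biUnion_finset fun m _ => isClosed_closure
  have hVmem : ∀ n, x n ∈ V n := by
    intro n
    refine ⟨hBmem n _, ?_⟩
    simp only [Set.mem_iUnion, not_exists]
    intro m hm hc
    exact absurd (hkey m _ n hc) (Nat.ne_of_gt (Finset.mem_range.1 hm))
  -- closures of V are "locally linearly ordered": each point is in at most one
  have hA : ∀ y : X, {n : ℕ | y ∈ closure (V n)}.Subsingleton := by
    intro y
    have key : ∀ n1 n2, n1 < n2 → y ∈ closure (V n1) → y ∈ closure (V n2) → False := by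
      intro n1 n2 hlt hn1 hn2
      have hy1 : y ∈ B n1 (g n1 + 2) := by
        have : closure (V n1) ⊆ B n1 (g n1 + 2) :=
          (closure_mono diff_subset).trans (hBcl n1 (g n1 + 2))
        exact this hn1
      have hy2 : y ∉ B n1 (g n1 + 2) := by
        have hsub : V n2 ⊆ (B n1 (g n1 + 2))ᶜ := by
          intro z hz
          intro hzB
          exact hz.2 (Set.mem_biUnion (Finset.mem_range.2 hlt) (subset_closure hzB))
        have : closure (V n2) ⊆ (B n1 (g n1 + 2))ᶜ :=
          closure_minimal hsub (hBopen n1 _).isClosed_compl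
        exact this hn2
      exact hy2 hy1
    intro n1 hn1 n2 hn2
    by_contra hne
    rcases Ne.lt_or_gt hne with h | h
    · exact key n1 n2 h hn1 hn2
    · exact key n2 n1 h hn2 hn1
  refine ⟨V, fun n => ⟨hVopen n, hVmem n⟩, ?_⟩
  intro y
  -- find a cover element containing y
  have hyC : y ∈ ⋃₀ T := hTcov ▸ Set.mem_univ y
  obtain ⟨W, hWT, hyW⟩ := hyC
  obtain ⟨hWopen, hWsub⟩ : IsOpen W ∧ {n : ℕ | x n ∈ closure W}.Subsingleton := hTsub hWT
  have hfF : f W ∈ F := ⟨⟨W, hWT⟩, rfl⟩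
  obtain ⟨N, hN⟩ := Filter.eventually_atTop.1 (hg (f W) hfF)
  -- for n ≥ N with x n ∉ closure W, W and V n are disjoint
  have hdisj : ∀ n, N ≤ n → x n ∉ closure W → W ∩ V n = ∅ := by
    intro n hn hxn
    have hex : ∃ k, B n k ∩ W = ∅ := by
      obtain ⟨k, hk⟩ := hBbasis n (closure W)ᶜ isClosed_closure.isOpen_compl hxn
      exact ⟨k, Set.eq_empty_of_subset_empty fun z hz =>
        (hk hz.1) (subset_closure hz.2)⟩
    have hfind : B n (f W n) ∩ W = ∅ := by
      rw [hf]; simp only [hex, dif_pos]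
      exact Nat.find_spec hex
    have hle : f W n ≤ g n + 3 := le_trans (hN n hn) (by omega)
    apply Set.eq_empty_of_subset_empty
    intro z hz
    rw [← hfind]
    exact ⟨hmono n hle hz.2.1, hz.1⟩
  -- the set of indices where W can meet V n is finite
  have hTfin : {n : ℕ | (W ∩ V n).Nonempty} ⊆ {n | n < N} ∪ {n | x n ∈ closure W} := by
    intro n hn
    by_contra hc
    simp only [Set.mem_setOf_eq, Set.mem_union, not_or, not_lt] at hc
    have : (W ∩ V n).Nonempty := hn
    rw [hdisj n hc.1 hc.2] at this
    exact Set.not_nonempty_empty this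
  have hfin : ({n | n < N} ∪ {n : ℕ | x n ∈ closure W}).Finite :=
    (Set.finite_lt_nat N).union hWsub.finite
  -- remove the closures of the V n's not adherent to y
  set I : Set ℕ := {n | ((W ∩ V n).Nonempty) ∧ y ∉ closure (V n)} with hI
  have hIfin : I.Finite := (hfin.subset hTfin).subset fun n hn => hn.1
  set W' : Set X := W \ ⋃ n ∈ I, closure (V n) with hW'
  refine ⟨W', hWopen.sdiff (hIfin.isClosed_biUnion fun n _ => isClosed_closure), ⟨hyW, ?_⟩, ?_⟩
  · simp only [Set.mem_iUnion, not_exists]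
    intro n hn
    exact fun hc => hn.2 hc
  · have hsub : {n : ℕ | (W' ∩ V n).Nonempty} ⊆ {n : ℕ | y ∈ closure (V n)} := by
      intro n hn
      obtain ⟨z, hzW', hzV⟩ := hn
      by_contra hyc
      have hnI : n ∈ I := ⟨⟨z, hzW'.1, hzV⟩, hyc⟩
      exact hzW'.2 (Set.mem_biUnion hnI (subset_closure hzV))
    exact (hA y).anti hsub
end

section
/- Let Z be a locally compact regular space of countable spread that is not hereditarily Lindelöf. Then there exist X, Y, and open sets {U_α : α < ω₁} such that: X is a locally compact non-Lindelöf subspace of Z; Y ⊆ X is right-separated in type ω₁ witnessed by the U_α; X = ⋃_{α<ω₁} U_α; X = cl_X(Y); and ℓ(X) = ℵ₁. -/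
open Set

/-- The ordinals below `ω₁`. -/
abbrev Omega1 : Type 1 := {o : Ordinal.{0} // o < (Cardinal.aleph 1).ord}

/-- `X` is a Lindelöf space: every open cover has a countable subcover. -/
def LindelofLike (X : Type*) [TopologicalSpace X] : Prop :=
  ∀ S : Set (Set X), (∀ U ∈ S, IsOpen U) → ⋃₀ S = Set.univ →
    ∃ T ⊆ S, T.Countable ∧ ⋃₀ T = Set.univ

/-- `X` has countable spread: every discrete subspace is countable. -/
def CountableSpread (X : Type*) [TopologicalSpace X] : Prop :=
  ∀ D : Set X, (∀ x ∈ D, ∃ U : Set X, IsOpen U ∧ x ∈ U ∧ ∀ y ∈ D, y ∈ U → y = x) →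
    D.Countable

open Cardinal

section Aux
universe u
variable {Z : Type u} [TopologicalSpace Z] [T2Space Z] [LocallyCompactSpace Z]

lemma omega1_isLimit : Order.IsSuccLimit ((Cardinal.aleph 1).ord) :=
  Cardinal.isSuccLimit_ord (Cardinal.aleph0_le_aleph 1)

lemma omega1_succ (α : Omega1) : ∃ β : Omega1, α < β := by
  refine ⟨⟨Order.succ α.val, omega1_isLimit.succ_lt α.2⟩, ?_⟩
  exact Subtype.mk_lt_mk.mpr (Order.lt_succ _)

lemma countable_lt_omega1 (α : Omega1) : Countable {β : Omega1 // β < α} := by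
  have h1 : #(Set.Iio α.val) = Cardinal.lift.{1} (α.val).card := Ordinal.mk_Iio_ordinal α.val
  have h2 : (α.val).card ≤ Cardinal.aleph0 := by
    have := Cardinal.lt_ord.mp α.2
    exact Order.lt_succ_iff.mp (by rw [Cardinal.succ_aleph0]; exact this)
  have h3 : #(Set.Iio α.val) ≤ Cardinal.aleph0 := by
    rw [h1]
    calc Cardinal.lift.{1} (α.val).card ≤ Cardinal.lift.{1} Cardinal.aleph0 :=
          Cardinal.lift_le.mpr h2
      _ = Cardinal.aleph0 := Cardinal.lift_aleph0
  haveI : Countable (Set.Iio α.val) := Cardinal.mk_le_aleph0_iff.mp h3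
  have hinj : Function.Injective
      (fun b : {β : Omega1 // β < α} => (⟨b.1.1, Subtype.coe_lt_coe.mpr b.2⟩ : Set.Iio α.val)) := by
    intro a b h
    simp only [Subtype.mk.injEq] at h
    exact Subtype.ext (Subtype.ext (congrArg (fun x : Set.Iio α.val => x.1) h))
  exact hinj.countable

lemma mk_omega1 : #Omega1 = Cardinal.aleph 1 := by
  have hstep : #Omega1 = Cardinal.lift.{1,0} (Cardinal.aleph 1) := by
    have h : #(Set.Iio ((Cardinal.aleph 1).ord)) =
        Cardinal.lift.{1} ((Cardinal.aleph 1).ord).card := Ordinal.mk_Iio_ordinal _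
    rw [Cardinal.card_ord] at h
    rw [← h]
    exact Cardinal.mk_congr (Equiv.subtypeEquivRight fun _ => Iff.rfl)
  rw [hstep, Cardinal.lift_aleph, Ordinal.lift_one]

lemma mk_omega1_prod_nat : #(Omega1 × ℕ) = Cardinal.aleph 1 := by
  rw [Cardinal.mk_prod, mk_omega1, Cardinal.mk_nat, Cardinal.lift_aleph,
    Cardinal.lift_aleph0, Ordinal.lift_one]
  exact Cardinal.mul_aleph0_eq (Cardinal.aleph0_le_aleph 1)

lemma compact_sub_cover {K V : Set Z} (hK : IsCompact K) (hV : IsOpen V) (hKV : K ⊆ V) :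
    ∃ A : Set (Set Z), A.Finite ∧
      (∀ G ∈ A, IsOpen G ∧ IsCompact (closure G) ∧ closure G ⊆ V) ∧ K ⊆ ⋃₀ A := by
  classical
  have h : ∀ x : K, ∃ G : Set Z,
      IsOpen G ∧ (x : Z) ∈ G ∧ IsCompact (closure G) ∧ closure G ⊆ V := by
    intro x
    obtain ⟨L, hLc, hxL, hLV⟩ := exists_compact_subset hV (hKV x.2)
    have hcl : closure (interior L) ⊆ L := closure_minimal interior_subset hLc.isClosed
    exact ⟨interior L, isOpen_interior, hxL,
      hLc.of_isClosed_subset isClosed_closure hcl, hcl.trans hLV⟩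
  choose G hGo hGm hGc hGV using h
  obtain ⟨t, ht⟩ := hK.elim_finite_subcover G hGo
    (fun z hz => mem_iUnion.mpr ⟨⟨z, hz⟩, hGm ⟨z, hz⟩⟩)
  refine ⟨G '' ↑t, (t.finite_toSet).image G, ?_, ?_⟩
  · rintro B ⟨x, -, rfl⟩
    exact ⟨hGo x, hGc x, hGV x⟩
  · rw [sUnion_image]
    exact ht

end Aux

section LemA
universe u
variable {Z : Type u} [TopologicalSpace Z]

lemma exists_cover_of_not_lindelof (S₀ : Set Z) (h : ¬ LindelofLike S₀) :
    ∃ 𝒱 : Set (Set Z), (∀ V ∈ 𝒱, IsOpen V) ∧ S₀ ⊆ ⋃₀ 𝒱 ∧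
      ∀ T ⊆ 𝒱, T.Countable → ¬ S₀ ⊆ ⋃₀ T := by
  classical
  rw [LindelofLike] at h
  push_neg at h
  obtain ⟨S, hSo, hSu, hnos⟩ := h
  have hchoice : ∀ c : S, ∃ O : Set Z, IsOpen O ∧ (Subtype.val ⁻¹' O : Set S₀) = c :=
    fun c => isOpen_induced_iff.mp (hSo c c.2)
  choose O hOopen hOeq using hchoice
  refine ⟨Set.range O, ?_, ?_, ?_⟩
  · rintro V ⟨c, rfl⟩; exact hOopen c
  · intro z hz
    have hz2 : (⟨z, hz⟩ : S₀) ∈ ⋃₀ S := hSu ▸ mem_univ _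
    obtain ⟨c, hcS, hzc⟩ := hz2
    refine ⟨O ⟨c, hcS⟩, ⟨⟨c, hcS⟩, rfl⟩, ?_⟩
    have hmem : (⟨z, hz⟩ : S₀) ∈ (Subtype.val ⁻¹' O ⟨c, hcS⟩ : Set S₀) := by
      rw [hOeq ⟨c, hcS⟩]; exact hzc
    exact hmem
  · intro T hT hTc hcov
    have hc : ∀ t : T, ∃ c : S, O c = (t : Set Z) := fun t => hT t.2
    choose cs hcs using hc
    haveI : Countable T := hTc.to_subtype
    refine hnos (Set.range (fun t : T => (cs t : Set S₀))) ?_ (countable_range _) ?_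
    · rintro B ⟨t, rfl⟩; exact (cs t).2
    · rw [eq_univ_iff_forall]
      intro x
      obtain ⟨V, hVT, hxV⟩ := hcov x.2
      refine ⟨(cs ⟨V, hVT⟩ : Set S₀), ⟨⟨V, hVT⟩, rfl⟩, ?_⟩
      have hmem : x ∈ (Subtype.val ⁻¹' O (cs ⟨V, hVT⟩) : Set S₀) := by
        show (x : Z) ∈ O (cs ⟨V, hVT⟩)
        rw [hcs ⟨V, hVT⟩]; exact hxV
      rw [hOeq (cs ⟨V, hVT⟩)] at hmem
      exact hmem
  
end LemA

section Rec
universe u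
variable {Z : Type u} [TopologicalSpace Z] [T2Space Z] [LocallyCompactSpace Z]
variable (S₀ : Set Z) (𝒱 : Set (Set Z))

/-- The local condition at stage `α` of the transfinite construction. -/
def GoodAt (α : Omega1) (prev : ∀ β : Omega1, β < α → Z × (ℕ → Set Z))
    (p : Z × (ℕ → Set Z)) : Prop :=
  (p.1 ∈ S₀ ∧ (∀ n, IsOpen (p.2 n)) ∧ (∀ n, IsCompact (closure (p.2 n))) ∧
    (∀ n, ∃ V ∈ 𝒱, closure (p.2 n) ⊆ V) ∧ (∃ n, p.1 ∈ p.2 n)) ∧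
  (∀ β (hβ : β < α), ∀ n, p.1 ∉ (prev β hβ).2 n) ∧
  (∀ β (hβ : β < α), ∀ n, closure ((prev β hβ).2 n) ⊆ ⋃ m, p.2 m)

lemma exists_goodAt (hop : ∀ V ∈ 𝒱, IsOpen V) (hcov : S₀ ⊆ ⋃₀ 𝒱)
    (hnc : ∀ T ⊆ 𝒱, T.Countable → ¬ S₀ ⊆ ⋃₀ T)
    (α : Omega1) (prev : ∀ β : Omega1, β < α → Z × (ℕ → Set Z))
    (hprev : ∀ β hβ n, IsCompact (closure ((prev β hβ).2 n)) ∧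
      ∃ V ∈ 𝒱, closure ((prev β hβ).2 n) ⊆ V) :
    ∃ p, GoodAt S₀ 𝒱 α prev p := by
  classical
  haveI : Countable {β : Omega1 // β < α} := countable_lt_omega1 α
  have hv : ∀ i : {β : Omega1 // β < α} × ℕ,
      ∃ V ∈ 𝒱, closure ((prev i.1.1 i.1.2).2 i.2) ⊆ V := fun i => (hprev _ _ _).2
  choose v hv𝒱 hvsub using hv
  have hnsub : ¬ S₀ ⊆ ⋃₀ (Set.range v) :=
    hnc _ (range_subset_iff.mpr hv𝒱) (countable_range v)
  obtain ⟨y₀, hy₀S, hy₀n⟩ : ∃ y₀ ∈ S₀, y₀ ∉ ⋃₀ (Set.range v) := not_subset.mp hnsub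
  have hy₀ : ∀ i, y₀ ∉ v i := fun i hi => hy₀n ⟨v i, mem_range_self i, hi⟩
  obtain ⟨V₀, hV₀𝒱, hy₀V₀⟩ := hcov hy₀S
  obtain ⟨L, hLc, hyL, hLV⟩ := exists_compact_subset (hop V₀ hV₀𝒱) hy₀V₀
  have hclW : closure (interior L) ⊆ L := closure_minimal interior_subset hLc.isClosed
  have hA : ∀ i : {β : Omega1 // β < α} × ℕ, ∃ A : Set (Set Z), A.Finite ∧
      (∀ G ∈ A, IsOpen G ∧ IsCompact (closure G) ∧ closure G ⊆ v i) ∧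
      closure ((prev i.1.1 i.1.2).2 i.2) ⊆ ⋃₀ A :=
    fun i => compact_sub_cover (hprev _ _ _).1 (hop _ (hv𝒱 i)) (hvsub i)
  choose A hAfin hAprop hAcov using hA
  have h𝒜c : (insert (interior L) (⋃ i, A i) : Set (Set Z)).Countable :=
    (Set.countable_iUnion fun i => (hAfin i).countable).insert _
  obtain ⟨f, hf⟩ := h𝒜c.exists_eq_range ⟨interior L, mem_insert _ _⟩
  have hmem : ∀ n, f n ∈ insert (interior L) (⋃ i, A i) := by
    intro n; rw [hf]; exact mem_range_self n
  have hprops : ∀ B ∈ insert (interior L) (⋃ i, A i),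
      IsOpen B ∧ IsCompact (closure B) ∧ ∃ V ∈ 𝒱, closure B ⊆ V := by
    rintro B hB
    rcases hB with rfl | hB
    · exact ⟨isOpen_interior, hLc.of_isClosed_subset isClosed_closure hclW,
        V₀, hV₀𝒱, hclW.trans hLV⟩
    · obtain ⟨i, hBi⟩ := mem_iUnion.mp hB
      obtain ⟨h1, h2, h3⟩ := hAprop i B hBi
      exact ⟨h1, h2, v i, hv𝒱 i, h3⟩
  obtain ⟨nW, hnW⟩ : ∃ n, f n = interior L := by
    have : interior L ∈ Set.range f := hf ▸ mem_insert _ _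
    exact this
  refine ⟨(y₀, f), ⟨hy₀S, fun n => (hprops _ (hmem n)).1, fun n => (hprops _ (hmem n)).2.1,
    fun n => (hprops _ (hmem n)).2.2, ⟨nW, by show y₀ ∈ f nW; rw [hnW]; exact hyL⟩⟩, ?_, ?_⟩
  · intro β hβ n hyb
    exact hy₀ (⟨⟨β, hβ⟩, n⟩) (hvsub ⟨⟨β, hβ⟩, n⟩ (subset_closure hyb))
  · intro β hβ n
    refine (hAcov ⟨⟨β, hβ⟩, n⟩).trans ?_
    have h1 : A ⟨⟨β, hβ⟩, n⟩ ⊆ insert (interior L) (⋃ i, A i) :=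
      (subset_iUnion A _).trans (subset_insert _ _)
    calc ⋃₀ A ⟨⟨β, hβ⟩, n⟩ ⊆ ⋃₀ insert (interior L) (⋃ i, A i) := sUnion_subset_sUnion h1
      _ = ⋃₀ Set.range f := by rw [hf]
      _ = ⋃ m, f m := sUnion_range f

end Rec

section Rec2
universe u
variable {Z : Type u} [TopologicalSpace Z] [T2Space Z] [LocallyCompactSpace Z]

lemma main_recursion (S₀ : Set Z) (𝒱 : Set (Set Z))
    (hop : ∀ V ∈ 𝒱, IsOpen V) (hcov : S₀ ⊆ ⋃₀ 𝒱)
    (hnc : ∀ T ⊆ 𝒱, T.Countable → ¬ S₀ ⊆ ⋃₀ T) :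
    ∃ (y : Omega1 → Z) (g : Omega1 → ℕ → Set Z),
      (∀ α, y α ∈ S₀) ∧ (∀ α n, IsOpen (g α n)) ∧
      (∀ α n, IsCompact (closure (g α n))) ∧
      (∀ α, ∃ n, y α ∈ g α n) ∧
      (∀ α β, α < β → ∀ n, y β ∉ g α n) ∧
      (∀ α β, α < β → ∀ n, closure (g α n) ⊆ ⋃ m, g β m) := by
  classical
  have wf : WellFounded ((· < ·) : Omega1 → Omega1 → Prop) := wellFounded_lt
  have hS₀ne : S₀.Nonempty := by
    by_contra hne
    rw [not_nonempty_iff_eq_empty] at hne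
    exact hnc ∅ (empty_subset _) countable_empty (by simp [hne])
  obtain ⟨z₀, hz₀⟩ := hS₀ne
  let junk : Z × (ℕ → Set Z) := (z₀, fun _ => (∅ : Set Z))
  let body : ∀ α : Omega1, (∀ β, β < α → Z × (ℕ → Set Z)) → Z × (ℕ → Set Z) :=
    fun α IH => if h : ∃ p, GoodAt S₀ 𝒱 α IH p then h.choose else junk
  let F : Omega1 → Z × (ℕ → Set Z) := wf.fix body
  have hFeq : ∀ α, F α = body α (fun β _ => F β) := fun α => wf.fix_eq body α
  have key : ∀ α, GoodAt S₀ 𝒱 α (fun β _ => F β) (F α) := by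
    intro α
    refine wf.induction (C := fun γ => GoodAt S₀ 𝒱 γ (fun β _ => F β) (F γ)) α ?_
    intro x IH
    have hex : ∃ p, GoodAt S₀ 𝒱 x (fun β _ => F β) p := by
      refine exists_goodAt S₀ 𝒱 hop hcov hnc x (fun β _ => F β) ?_
      intro β hβ n
      exact ⟨(IH β hβ).1.2.2.1 n, (IH β hβ).1.2.2.2.1 n⟩
    rw [hFeq x]
    show GoodAt S₀ 𝒱 x (fun β _ => F β)
      (if h : ∃ p, GoodAt S₀ 𝒱 x (fun β _ => F β) p then h.choose else junk)
    rw [dif_pos hex]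
    exact hex.choose_spec
  refine ⟨fun α => (F α).1, fun α => (F α).2, fun α => (key α).1.1,
    fun α n => (key α).1.2.1 n, fun α n => (key α).1.2.2.1 n,
    fun α => (key α).1.2.2.2.2, fun α β hαβ n => (key β).2.1 α hαβ n,
    fun α β hαβ n => (key β).2.2 α hαβ n⟩

end Rec2

/-- in a locally compact (Hausdorff, hence regular) space `Z` of countable
spread which is not hereditarily Lindelöf, there are a locally compact non-Lindelöf
subspace `X`, a subset `Y` right-separated in type `ω₁` by open sets `U_α`, with
`X = ⋃ U_α`, `X = cl Y`, and `ℓ(X) = ℵ₁`. -/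
theorem stmt5 {Z : Type u} [TopologicalSpace Z] [T2Space Z] [LocallyCompactSpace Z]
    (hspread : CountableSpread Z)
    (hnotHL : ∃ S : Set Z, ¬ LindelofLike S) :
    ∃ X : Set Z, LocallyCompactSpace X ∧ ¬ LindelofLike X ∧
      ∃ (y : Omega1 → X) (U : Omega1 → Set X),
        Function.Injective y ∧
        (∀ α, IsOpen (U α)) ∧
        (∀ α, y α ∈ U α) ∧
        (∀ α β : Omega1, α < β → y β ∉ U α) ∧
        (⋃ α, U α) = Set.univ ∧
        closure (Set.range y) = Set.univ ∧
        lindelofNumber X = Cardinal.lift.{u} (Cardinal.aleph 1) := by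
  classical
  obtain ⟨S₀, hS₀⟩ := hnotHL
  obtain ⟨𝒱, hop, hcov, hnc⟩ := exists_cover_of_not_lindelof S₀ hS₀
  obtain ⟨y, g, hyS, hgo, hgc, hyg, hsep, hcl⟩ := main_recursion S₀ 𝒱 hop hcov hnc
  have hzero : (0 : Ordinal.{0}) < (Cardinal.aleph 1).ord := omega1_isLimit.pos
  let Yset : Set Z := Set.range y
  let G : Set Z := ⋃ (α : Omega1), ⋃ n, g α n
  let X : Set Z := closure Yset ∩ G
  have hGmem : ∀ α n (z : Z), z ∈ g α n → z ∈ G := by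
    intro α n z hz
    exact mem_iUnion.mpr ⟨α, mem_iUnion.mpr ⟨n, hz⟩⟩
  have hclG : ∀ α n, closure (g α n) ⊆ G := by
    intro α n
    obtain ⟨β, hβ⟩ := omega1_succ α
    refine (hcl α β hβ n).trans ?_
    exact iUnion_subset fun m z hz => hGmem β m z hz
  have hyX : ∀ α, y α ∈ X := by
    intro α
    obtain ⟨n, hn⟩ := hyg α
    exact ⟨subset_closure (mem_range_self α), hGmem α n _ hn⟩
  let yX : Omega1 → X := fun α => ⟨y α, hyX α⟩
  let U : Omega1 → Set X := fun α => Subtype.val ⁻¹' (⋃ n, g α n)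
  have hUopen : ∀ α, IsOpen (U α) :=
    fun α => (isOpen_iUnion fun n => hgo α n).preimage continuous_subtype_val
  have hyU : ∀ α, yX α ∈ U α := by
    intro α; obtain ⟨n, hn⟩ := hyg α; exact mem_iUnion.mpr ⟨n, hn⟩
  have hsepX : ∀ α β, α < β → yX β ∉ U α := by
    intro α β hαβ hmem
    obtain ⟨n, hn⟩ := mem_iUnion.mp hmem
    exact hsep α β hαβ n hn
  have hUcover : (⋃ α, U α) = Set.univ := by
    rw [eq_univ_iff_forall]
    intro x
    obtain ⟨α, hα⟩ := mem_iUnion.mp x.2.2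
    exact mem_iUnion.mpr ⟨α, hα⟩
  have hyinj : Function.Injective yX := by
    intro a b hab
    by_contra hne
    rcases lt_or_gt_of_ne hne with h | h
    · exact hsepX a b h (hab ▸ hyU a)
    · exact hsepX b a h (hab.symm ▸ hyU b)
  have hdense : closure (Set.range yX) = Set.univ := by
    rw [eq_univ_iff_forall]
    intro x
    rw [closure_subtype]
    have himg : Subtype.val '' Set.range yX = Yset := by
      rw [← range_comp]; rfl
    rw [himg]
    exact x.2.1
  have claim : ∀ T : Set (Set ↥X), T ⊆ Set.range U → T.Countable → ⋃₀ T ≠ Set.univ := by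
    intro T hTsub hTc hTu
    rcases T.eq_empty_or_nonempty with rfl | hTne
    · rw [sUnion_empty] at hTu
      have : yX ⟨0, hzero⟩ ∈ (∅ : Set ↥X) := by rw [hTu]; exact mem_univ _
      exact this
    · obtain ⟨f, hf⟩ := hTc.exists_eq_range hTne
      have hidx : ∀ n : ℕ, ∃ α : Omega1, U α = f n := by
        intro n
        have : f n ∈ T := hf ▸ mem_range_self n
        exact hTsub this
      choose idx hidx using hidx
      have hbdd : BddAbove (Set.range fun n => (idx n).val) := Ordinal.bddAbove_range _
      have hlt : (⨆ n, (idx n).val) < (Cardinal.aleph 1).ord := by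
        apply Ordinal.iSup_lt_ord
        · rw [Cardinal.mk_nat]
          rw [Cardinal.isRegular_aleph_one.cof_eq]
          exact Cardinal.aleph0_lt_aleph_one
        · exact fun n => (idx n).2
      have hδlt := omega1_isLimit.succ_lt hlt
      have hδ : ∀ n, idx n < (⟨Order.succ (⨆ n, (idx n).val), hδlt⟩ : Omega1) := by
        intro n
        exact Subtype.coe_lt_coe.mp (lt_of_le_of_lt (le_ciSup hbdd n) (Order.lt_succ _))
      have hmem : yX ⟨Order.succ (⨆ n, (idx n).val), hδlt⟩ ∈ ⋃₀ T := by
        rw [hTu]; exact mem_univ _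
      obtain ⟨t, htT, hyt⟩ := hmem
      obtain ⟨n, rfl⟩ : ∃ n, f n = t := by rw [hf] at htT; exact htT
      rw [← hidx n] at hyt
      exact hsepX (idx n) _ (hδ n) hyt
  have hLC : LocallyCompactSpace ↥X := by
    refine ⟨fun x n hn => ?_⟩
    rw [mem_nhds_subtype] at hn
    obtain ⟨m, hm, hmn⟩ := hn
    obtain ⟨α, hα⟩ := mem_iUnion.mp x.2.2
    obtain ⟨n₀, hn₀⟩ := mem_iUnion.mp hα
    have hm' : m ∩ g α n₀ ∈ nhds (x : Z) := by
      exact Filter.inter_mem hm ((hgo α n₀).mem_nhds hn₀)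
    obtain ⟨K, hKnhds, hKsub, hKc⟩ := LocallyCompactSpace.local_compact_nhds (x : Z) _ hm'
    refine ⟨Subtype.val ⁻¹' K, ?_, ?_, ?_⟩
    · rw [mem_nhds_subtype]; exact ⟨K, hKnhds, Subset.rfl⟩
    · exact fun z hz => hmn (mem_preimage.mpr (hKsub hz).1)
    · rw [Subtype.isCompact_iff]
      have himg : Subtype.val '' (Subtype.val ⁻¹' K : Set ↥X) = K ∩ closure Yset := by
        rw [Subtype.image_preimage_coe]
        ext z
        constructor
        · rintro ⟨hzX, hzK⟩
          exact ⟨hzK, hzX.1⟩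
        · rintro ⟨hzK, hzc⟩
          exact ⟨⟨hzc, hGmem α n₀ z (hKsub hzK).2⟩, hzK⟩
      rw [himg]
      exact hKc.inter_right isClosed_closure
  refine ⟨X, hLC, ?_, yX, U, hyinj, hUopen, hyU, hsepX, hUcover, hdense, ?_⟩
  · intro hL
    obtain ⟨T, hTsub, hTc, hTu⟩ := hL (Set.range U)
      (by rintro V ⟨α, rfl⟩; exact hUopen α)
      (by rw [sUnion_range]; exact hUcover)
    exact claim T hTsub hTc hTu
  · -- the Lindelöf number
    unfold lindelofNumber
    rw [Cardinal.lift_id]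
    have halepha : (Cardinal.aleph0 : Cardinal.{u}) ≤ Cardinal.aleph 1 :=
      Cardinal.aleph0_le_aleph 1
    have hsubcover : ∀ S : Set (Set ↥X), (∀ V ∈ S, IsOpen V) → ⋃₀ S = Set.univ →
        ∃ T ⊆ S, Cardinal.mk T ≤ Cardinal.aleph 1 ∧ ⋃₀ T = Set.univ := by
      intro S hSo hSu
      have hSne : S.Nonempty := by
        rcases S.eq_empty_or_nonempty with rfl | h
        · rw [sUnion_empty] at hSu
          have : yX ⟨0, hzero⟩ ∈ (∅ : Set ↥X) := by rw [hSu]; exact mem_univ _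
          exact absurd this (notMem_empty _)
        · exact h
      obtain ⟨s₀, hs₀⟩ := hSne
      have hKcpt : ∀ (α : Omega1) (n : ℕ),
          IsCompact (Subtype.val ⁻¹' (closure (g α n)) : Set ↥X) := by
        intro α n
        rw [Subtype.isCompact_iff, Subtype.image_preimage_coe]
        have heq : X ∩ closure (g α n) = closure (g α n) ∩ closure Yset := by
          ext z
          constructor
          · rintro ⟨⟨hz1, _⟩, hz3⟩
            exact ⟨hz3, hz1⟩
          · rintro ⟨hz1, hz2⟩
            exact ⟨⟨hz2, hclG α n hz1⟩, hz1⟩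
        rw [heq]
        exact (hgc α n).inter_right isClosed_closure
      have hfin : ∀ (α : Omega1) (n : ℕ), ∃ t : Finset S,
          (Subtype.val ⁻¹' (closure (g α n)) : Set ↥X) ⊆ ⋃ i ∈ t, (i : Set ↥X) := by
        intro α n
        apply (hKcpt α n).elim_finite_subcover (fun i : S => (i : Set ↥X)) (fun i => hSo i i.2)
        have : (⋃ i : S, (i : Set ↥X)) = Set.univ := by rw [← sUnion_eq_iUnion, hSu]
        rw [this]
        exact Set.subset_univ _
      choose t ht using hfin
      have henum : ∀ (α : Omega1) (n : ℕ), ∃ fe : ℕ → Set ↥X, (∀ k, fe k ∈ S) ∧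
          ∀ i : S, i ∈ t α n → (i : Set ↥X) ∈ Set.range fe := by
        intro α n
        have hc : (insert s₀ ((fun i : S => (i : Set ↥X)) '' ↑(t α n))).Countable :=
          (((t α n).finite_toSet.image _).countable).insert _
        obtain ⟨fe, hfe⟩ := hc.exists_eq_range ⟨s₀, mem_insert _ _⟩
        refine ⟨fe, ?_, ?_⟩
        · intro k
          have hk : fe k ∈ insert s₀ ((fun i : S => (i : Set ↥X)) '' ↑(t α n)) :=
            hfe ▸ mem_range_self k
          rcases hk with h | ⟨i, _, h⟩
          · rw [h]; exact hs₀
          · rw [← h]; exact i.2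
        · intro i hi
          rw [← hfe]
          exact mem_insert_of_mem _ ⟨i, hi, rfl⟩
      choose fe hfeS hfeR using henum
      let F : Omega1 × ℕ → Set ↥X := fun p => fe p.1 (Nat.unpair p.2).1 (Nat.unpair p.2).2
      refine ⟨Set.range F, ?_, ?_, ?_⟩
      · rintro B ⟨p, rfl⟩
        exact hfeS p.1 _ _
      · have h1 := Cardinal.mk_range_le_lift (f := F)
        rw [mk_omega1_prod_nat, Cardinal.lift_aleph, Ordinal.lift_one] at h1
        apply Cardinal.lift_le.{1}.mp
        rw [Cardinal.lift_aleph, Ordinal.lift_one]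
        exact h1
      · rw [eq_univ_iff_forall]
        intro x
        obtain ⟨α, hα⟩ := mem_iUnion.mp x.2.2
        obtain ⟨n, hn⟩ := mem_iUnion.mp hα
        have hx : x ∈ (Subtype.val ⁻¹' (closure (g α n)) : Set ↥X) :=
          mem_preimage.mpr (subset_closure hn)
        obtain ⟨i, hit, hxi⟩ := mem_iUnion₂.mp (ht α n hx)
        obtain ⟨k, hk⟩ := hfeR α n i hit
        refine ⟨F (α, Nat.pair n k), mem_range_self _, ?_⟩
        have hFeq : F (α, Nat.pair n k) = fe α n k := by
          show fe α (Nat.unpair (Nat.pair n k)).1 (Nat.unpair (Nat.pair n k)).2 = fe α n k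
          rw [Nat.unpair_pair]
        rw [hFeq, hk]
        exact hxi
    have hmemset : (Cardinal.aleph 1 : Cardinal.{u}) ∈
        {κ : Cardinal.{u} | Cardinal.aleph0 ≤ κ ∧
          ∀ S : Set (Set ↥X), (∀ V ∈ S, IsOpen V) → ⋃₀ S = Set.univ →
            ∃ T ⊆ S, Cardinal.mk T ≤ κ ∧ ⋃₀ T = Set.univ} := ⟨halepha, hsubcover⟩
    have hlower : ∀ κ ∈ {κ : Cardinal.{u} | Cardinal.aleph0 ≤ κ ∧
          ∀ S : Set (Set ↥X), (∀ V ∈ S, IsOpen V) → ⋃₀ S = Set.univ →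
            ∃ T ⊆ S, Cardinal.mk T ≤ κ ∧ ⋃₀ T = Set.univ},
        (Cardinal.aleph 1 : Cardinal.{u}) ≤ κ := by
      rintro κ ⟨hκ0, hκcov⟩
      by_contra hκlt
      push_neg at hκlt
      have hκℵ₀ : κ ≤ Cardinal.aleph0 := by
        rw [← Cardinal.succ_aleph0] at hκlt
        exact Order.lt_succ_iff.mp hκlt
      obtain ⟨T, hTsub, hTκ, hTu⟩ := hκcov (Set.range U)
        (by rintro V ⟨α, rfl⟩; exact hUopen α)
        (by rw [sUnion_range]; exact hUcover)
      have hTcnt : T.Countable := by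
        have : Countable ↥T := Cardinal.mk_le_aleph0_iff.mp (hTκ.trans hκℵ₀)
        exact Set.countable_coe_iff.mp this
      exact claim T hTsub hTcnt hTu
    exact le_antisymm (csInf_le' hmemset) (le_csInf ⟨_, hmemset⟩ hlower)
end

section
/- Let X be a regular space of countable spread. Then any right-separated subspace of X of type ω₁ is hereditarily separable. -/
open Set

lemma countable_subtype_lt {a : Ordinal.{0}} (ha : a < (Cardinal.aleph 1).ord) :
    Countable {β : Ordinal.{0} // β < a} := by
  have : Countable a.ToType := by
    rw [← Cardinal.mk_le_aleph0_iff, Cardinal.mk_toType]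
    have := Cardinal.lt_ord.1 ha
    rwa [← Cardinal.succ_aleph0, Order.lt_succ_iff] at this
  exact Countable.of_equiv _ (Ordinal.ToType.mk (o := a)).toEquiv.symm

lemma omega1_not_countable : ¬ Countable Omega1 := by
  intro h
  have e : Omega1 ≃ ((Cardinal.aleph 1).ord).ToType :=
    (Equiv.subtypeEquivRight (fun o => Iff.rfl)).trans
      (Ordinal.ToType.mk (o := (Cardinal.aleph 1).ord)).toEquiv
  have : Countable ((Cardinal.aleph 1).ord).ToType := Countable.of_equiv _ e
  rw [← Cardinal.mk_le_aleph0_iff, Cardinal.mk_toType, Cardinal.card_ord] at this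
  exact absurd this (not_le.2 Cardinal.aleph0_lt_aleph_one)

lemma countable_Iio_omega1 (o : Omega1) : (Set.Iio o).Countable := by
  have : Countable {β : Ordinal.{0} // β < o.val} := countable_subtype_lt o.2
  have e : {β : Ordinal.{0} // β < o.val} ≃ (Set.Iio o) :=
    { toFun := fun b => ⟨⟨b.1, b.2.trans o.2⟩, b.2⟩
      invFun := fun b => ⟨b.1.1, b.2⟩
      left_inv := fun b => rfl
      right_inv := fun b => rfl }
  exact (Set.countable_coe_iff).1 (Countable.of_equiv _ e)

lemma countable_Iic_omega1 (o : Omega1) : (Set.Iic o).Countable := by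
  have hs : Order.succ o.val < (Cardinal.aleph 1).ord :=
    (Cardinal.isSuccLimit_ord (le_of_lt Cardinal.aleph0_lt_aleph_one)).succ_lt o.2
  have : Countable {β : Ordinal.{0} // β < Order.succ o.val} := countable_subtype_lt hs
  have e : {β : Ordinal.{0} // β < Order.succ o.val} ≃ (Set.Iic o) :=
    { toFun := fun b => ⟨⟨b.1, b.2.trans hs⟩, Order.lt_succ_iff.1 b.2⟩
      invFun := fun b => ⟨b.1.1, Order.lt_succ_iff.2 b.2⟩
      left_inv := fun b => rfl
      right_inv := fun b => rfl }
  exact (Set.countable_coe_iff).1 (Countable.of_equiv _ e)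

lemma omega1_wf : @WellFounded Omega1 (· < ·) :=
  InvImage.wf Subtype.val Ordinal.lt_wf

section main

variable {X : Type*} [TopologicalSpace X] {y : Omega1 → X} {T : Set X}

/-- Key construction: if `T` has no countable dense subset, produce a strictly increasing
sequence of indices whose points form a left-separated subset of `T`. -/
lemma exists_mono_sequence (hT : T ⊆ Set.range y)
    (H : ∀ D ⊆ T, D.Countable → ∃ t ∈ T, t ∉ closure D) :
    ∃ g : Omega1 → Omega1, StrictMono g ∧ ∀ o : Omega1,
      y (g o) ∈ T ∧
      y (g o) ∉ closure {t | t ∈ T ∧ ∃ η, η < o ∧ ∃ β, β ≤ g η ∧ y β = t} := by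
  have key : ∀ (o : Omega1) (g' : ∀ η : Omega1, η < o → Omega1),
      ∃ α : Omega1, y α ∈ T ∧
        y α ∉ closure {t | t ∈ T ∧ ∃ η, ∃ h : η < o, ∃ β, β ≤ g' η h ∧ y β = t} ∧
        ∀ η (h : η < o), g' η h < α := by
    intro o g'
    set D : Set X := {t | t ∈ T ∧ ∃ η, ∃ h : η < o, ∃ β, β ≤ g' η h ∧ y β = t} with hD
    have hDT : D ⊆ T := fun t ht => ht.1
    have hDc : D.Countable := by
      have hsub : D ⊆ ⋃ η : (Set.Iio o), y '' (Set.Iic (g' η.1 η.2)) := by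
        rintro t ⟨htT, η, h, β, hβ, rfl⟩
        exact Set.mem_iUnion.2 ⟨⟨η, h⟩, Set.mem_image_of_mem _ hβ⟩
      have : Countable (Set.Iio o) := (countable_Iio_omega1 o).to_subtype
      exact Set.Countable.mono hsub
        (Set.countable_iUnion fun η => ((countable_Iic_omega1 _).image y))
    obtain ⟨t, htT, htc⟩ := H D hDT hDc
    obtain ⟨α, rfl⟩ := hT htT
    refine ⟨α, htT, htc, fun η h => ?_⟩
    by_contra hle
    push_neg at hle
    exact htc (subset_closure ⟨htT, η, h, α, hle, rfl⟩)
  let F : ∀ o : Omega1, (∀ η : Omega1, η < o → Omega1) → Omega1 :=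
    fun o g' => Classical.choose (key o g')
  let g : Omega1 → Omega1 := omega1_wf.fix F
  have hg : ∀ o, g o = F o (fun η _ => g η) := fun o => omega1_wf.fix_eq F o
  have hspec : ∀ o : Omega1, y (g o) ∈ T ∧
      y (g o) ∉ closure {t | t ∈ T ∧ ∃ η, ∃ _ : η < o, ∃ β, β ≤ g η ∧ y β = t} ∧
      ∀ η (_ : η < o), g η < g o := by
    intro o
    have := Classical.choose_spec (key o (fun η _ => g η))
    rw [hg o]
    exact this
  refine ⟨g, fun a b hab => (hspec b).2.2 a hab, fun o => ⟨(hspec o).1, ?_⟩⟩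
  have := (hspec o).2.1
  convert this using 3
  ext t
  constructor
  · rintro ⟨h1, η, h2, β, h3, h4⟩; exact ⟨h1, η, h2, β, h3, h4⟩
  · rintro ⟨h1, η, h2, β, h3, h4⟩; exact ⟨h1, η, h2, β, h3, h4⟩

end main

/-- any right-separated subspace of type `ω₁` of a regular space of countable
spread is hereditarily separable. -/
theorem stmt6 {X : Type*} [TopologicalSpace X] [RegularSpace X] [T1Space X]
    (hspread : CountableSpread X)
    (y : Omega1 → X) (hinj : Function.Injective y)
    (hrs : ∀ α : Omega1, ∃ U : Set X, IsOpen U ∧ y α ∈ U ∧ ∀ β : Omega1, α < β → y β ∉ U) :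
    ∀ T ⊆ Set.range y, ∃ D ⊆ T, D.Countable ∧ T ⊆ closure D := by
  intro T hT
  by_contra hcon
  push_neg at hcon
  have H : ∀ D ⊆ T, D.Countable → ∃ t ∈ T, t ∉ closure D := by
    intro D hD hDc
    obtain ⟨t, htT, htc⟩ := Set.not_subset.1 (hcon D hD hDc)
    exact ⟨t, htT, htc⟩
  obtain ⟨g, hgmono, hgspec⟩ := exists_mono_sequence hT H
  set E : Set X := Set.range (y ∘ g) with hE
  have hdisc : ∀ x ∈ E, ∃ U : Set X, IsOpen U ∧ x ∈ U ∧ ∀ z ∈ E, z ∈ U → z = x := by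
    rintro x ⟨o, rfl⟩
    obtain ⟨V, hVopen, hVmem, hVright⟩ := hrs (g o)
    set C := {t | t ∈ T ∧ ∃ η, η < o ∧ ∃ β, β ≤ g η ∧ y β = t} with hC
    refine ⟨V ∩ (closure C)ᶜ, hVopen.inter (isOpen_compl_iff.2 isClosed_closure),
      ⟨hVmem, (hgspec o).2⟩, ?_⟩
    rintro z ⟨p, rfl⟩ ⟨hzV, hzC⟩
    rcases lt_trichotomy p o with h | h | h
    · exfalso
      apply hzC
      exact subset_closure ⟨(hgspec p).1, p, h, g p, le_refl _, rfl⟩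
    · rw [h]
    · exact absurd hzV (hVright (g p) (hgmono h))
  have hEc : E.Countable := hspread E hdisc
  have hinj2 : Function.Injective (y ∘ g) := hinj.comp hgmono.injective
  have : Countable Omega1 := by
    have := hEc.to_subtype
    exact Countable.of_equiv E (Equiv.ofInjective _ hinj2).symm
  exact omega1_not_countable this
end

section
/- For a Boolean algebra A, the Stone space S(A) is hereditarily Lindelöf if and only if every ideal of A is countably generated. -/
open Set

/-- The Stone space of a Boolean algebra `A`: the set of maximal ideals of `A`,
topologized by the basic open sets `{I | a ∉ I}` for `a : A`. -/
def StoneSpace (A : Type*) [BooleanAlgebra A] : Type _ :=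
  {I : Order.Ideal A // I.IsMaximal}

instance (A : Type*) [BooleanAlgebra A] : TopologicalSpace (StoneSpace A) :=
  TopologicalSpace.generateFrom {S | ∃ a : A, S = {I : StoneSpace A | a ∉ I.1}}

/-- An ideal of a Boolean algebra is countably generated if some countable subset
generates it: every element of the ideal is below a finite join of generators. -/
def CountablyGeneratedIdeal {A : Type*} [BooleanAlgebra A] (I : Order.Ideal A) : Prop :=
  ∃ D : Set A, D.Countable ∧ D ⊆ (I : Set A) ∧
    ∀ a ∈ I, ∃ F : Finset A, ↑F ⊆ D ∧ a ≤ F.sup id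

section Aux
variable {A : Type*} [BooleanAlgebra A]

lemma finsetSup_mem_ideal (I : Order.Ideal A) (F : Finset A) (h : ∀ x ∈ F, x ∈ I) :
    F.sup id ∈ I := by
  classical
  induction F using Finset.induction_on with
  | empty => simp only [Finset.sup_empty]; exact I.bot_mem
  | insert _ _ hx ih =>
    rw [Finset.sup_insert]
    exact Order.Ideal.sup_mem (h _ (Finset.mem_insert_self _ _))
      (ih fun x hxF => h x (Finset.mem_insert_of_mem hxF))

/-- The ideal generated by a set `W`. -/
def genIdeal (W : Set A) : Order.Ideal A :=
  Order.IsIdeal.toIdeal (I := {x : A | ∃ F : Finset A, ↑F ⊆ W ∧ x ≤ F.sup id})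
    { IsLowerSet := by
        rintro x y hyx ⟨F, hF, hx⟩
        exact ⟨F, hF, hyx.trans hx⟩
      Nonempty := ⟨⊥, ∅, by simp⟩
      Directed := by
        classical
        rintro x ⟨F, hF, hx⟩ y ⟨G, hG, hy⟩
        refine ⟨x ⊔ y, ⟨F ∪ G, ?_, ?_⟩, le_sup_left, le_sup_right⟩
        · rw [Finset.coe_union]; exact Set.union_subset hF hG
        · exact sup_le (hx.trans (Finset.sup_mono Finset.subset_union_left))
            (hy.trans (Finset.sup_mono Finset.subset_union_right)) }

lemma mem_genIdeal {W : Set A} {x : A} :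
    x ∈ genIdeal W ↔ ∃ F : Finset A, ↑F ⊆ W ∧ x ≤ F.sup id := Iff.rfl

lemma subset_genIdeal {W : Set A} : W ⊆ (genIdeal W : Set A) := by
  intro w hw
  exact ⟨{w}, by simpa using hw, by simp⟩

/-- Existence of a maximal ideal containing all of `W` and avoiding `a`, provided `a` is not
in the ideal generated by `W`. -/
lemma exists_maximal_ideal (W : Set A) (a : A) (ha : a ∉ genIdeal W) :
    ∃ M : StoneSpace A, a ∉ M.1 ∧ W ⊆ (M.1 : Set A) := by
  have hdisj : Disjoint ((Order.PFilter.principal a : Order.PFilter A) : Set A)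
      ((genIdeal W : Order.Ideal A) : Set A) := by
    rw [Set.disjoint_left]
    rintro x hx hxJ
    exact ha ((genIdeal W).lower hx hxJ)
  obtain ⟨J, hJp, hIJ, hdJ⟩ := DistribLattice.prime_ideal_of_disjoint_filter_ideal hdisj
  haveI := hJp
  refine ⟨⟨J, inferInstance⟩, ?_, fun w hw => hIJ (subset_genIdeal hw)⟩
  exact fun haJ => Set.disjoint_left.1 hdJ (Order.PFilter.mem_principal.2 le_rfl) haJ

/-- Basic opens form a basis: membership in a generated open yields a basic open. -/
lemma exists_basic (V : Set (StoneSpace A))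
    (hV : TopologicalSpace.GenerateOpen {S | ∃ a : A, S = {I : StoneSpace A | a ∉ I.1}} V)
    {t : StoneSpace A} (ht : t ∈ V) :
    ∃ a : A, a ∉ t.1 ∧ {I : StoneSpace A | a ∉ I.1} ⊆ V := by
  induction hV with
  | basic U hU => obtain ⟨a, rfl⟩ := hU; exact ⟨a, ht, le_rfl⟩
  | univ =>
    exact ⟨⊤, t.2.toIsProper.top_notMem, fun _ _ => trivial⟩
  | inter U V hU hV ihU ihV =>
    obtain ⟨a, haT, haU⟩ := ihU ht.1
    obtain ⟨b, hbT, hbV⟩ := ihV ht.2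
    haveI := t.2
    refine ⟨a ⊓ b, ?_, fun s hs => ⟨haU fun h => hs (s.1.lower inf_le_left h),
      hbV fun h => hs (s.1.lower inf_le_right h)⟩⟩
    have hc : (a ⊓ b)ᶜ ∈ t.1 := by
      rw [compl_inf]
      exact Order.Ideal.sup_mem (Order.Ideal.IsPrime.compl_mem_of_notMem inferInstance haT)
        (Order.Ideal.IsPrime.compl_mem_of_notMem inferInstance hbT)
    exact t.2.toIsProper.notMem_of_compl_mem hc
  | sUnion 𝒮 h𝒮 ih =>
    obtain ⟨U, hU, htU⟩ := ht
    obtain ⟨a, haT, haU⟩ := ih U hU htU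
    exact ⟨a, haT, fun s hs => ⟨U, hU, haU hs⟩⟩

lemma isOpen_stone_iff {V : Set (StoneSpace A)} :
    IsOpen V ↔ TopologicalSpace.GenerateOpen
      {S | ∃ a : A, S = {I : StoneSpace A | a ∉ I.1}} V := Iff.rfl

lemma isOpen_basic (a : A) : IsOpen {I : StoneSpace A | a ∉ I.1} :=
  TopologicalSpace.GenerateOpen.basic _ ⟨a, rfl⟩

end Aux

/-- the Stone space of `A` is hereditarily Lindelöf iff every ideal of `A`
is countably generated. -/
theorem stmt7 {A : Type*} [BooleanAlgebra A] :
    (∀ T : Set (StoneSpace A),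
        ∀ S : Set (Set T), (∀ U ∈ S, IsOpen U) → ⋃₀ S = Set.univ →
          ∃ S' ⊆ S, S'.Countable ∧ ⋃₀ S' = Set.univ) ↔
    ∀ I : Order.Ideal A, CountablyGeneratedIdeal I := by
  classical
  constructor
  · -- hereditarily Lindelöf ⇒ every ideal countably generated
    intro hL I
    set T : Set (StoneSpace A) := {M | ∃ a ∈ I, a ∉ M.1} with hT
    set pre : A → Set T := fun a => (Subtype.val ⁻¹' {M : StoneSpace A | a ∉ M.1}) with hpre
    set S : Set (Set T) := pre '' (I : Set A) with hS
    have hopen : ∀ U ∈ S, IsOpen U := by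
      rintro U ⟨a, _, rfl⟩
      exact (isOpen_basic a).preimage continuous_subtype_val
    have hcov : ⋃₀ S = Set.univ := by
      apply Set.eq_univ_of_forall
      rintro ⟨M, a, haI, haM⟩
      exact ⟨pre a, ⟨a, haI, rfl⟩, haM⟩
    obtain ⟨S', hS'S, hS'c, hS'cov⟩ := hL T S hopen hcov
    set g : Set T → A := fun U => if h : U ∈ S then h.choose else ⊥ with hg
    have hgspec : ∀ U ∈ S, g U ∈ I ∧ U = pre (g U) := by
      intro U hU
      have := hU.choose_spec
      rw [hg]; simp only [dif_pos hU]
      exact ⟨this.1, this.2.symm⟩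
    refine ⟨g '' S', hS'c.image g, ?_, ?_⟩
    · rintro x ⟨U, hU, rfl⟩
      exact (hgspec U (hS'S hU)).1
    · intro a haI
      by_contra hcon
      push_neg at hcon
      have haJ : a ∉ genIdeal (g '' S') := by
        rw [mem_genIdeal]
        push_neg
        exact fun F hF => hcon F hF
      obtain ⟨M, haM, hDM⟩ := exists_maximal_ideal _ a haJ
      have hMT : M ∈ T := ⟨a, haI, haM⟩
      have : (⟨M, hMT⟩ : T) ∈ ⋃₀ S' := hS'cov ▸ Set.mem_univ _
      obtain ⟨U, hUS', hMU⟩ := this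
      have hUspec := hgspec U (hS'S hUS')
      rw [hUspec.2] at hMU
      exact hMU (hDM ⟨U, hUS', rfl⟩)
  · -- every ideal countably generated ⇒ hereditarily Lindelöf
    intro hcg T S hopen hcov
    set preT : A → Set T := fun a => {t : T | a ∉ (t : StoneSpace A).1} with hpreT
    set W : Set A := {a | ∃ U ∈ S, preT a ⊆ U} with hW
    have key : ∀ t : T, ∃ a ∈ W, a ∉ (t : StoneSpace A).1 := by
      intro t
      have ht : (t : T) ∈ ⋃₀ S := hcov ▸ Set.mem_univ _
      obtain ⟨U, hUS, htU⟩ := ht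
      obtain ⟨V, hVopen, rfl⟩ := isOpen_induced_iff.mp (hopen U hUS)
      obtain ⟨a, hat, haV⟩ := exists_basic V (isOpen_stone_iff.mp hVopen) htU
      exact ⟨a, ⟨Subtype.val ⁻¹' V, hUS, fun s hs => haV hs⟩, hat⟩
    obtain ⟨D, hDc, hDW, hDgen⟩ := hcg (genIdeal W)
    set G : A → Finset A := fun d =>
      if h : d ∈ (genIdeal W : Order.Ideal A) then h.choose else ∅ with hG
    have hGspec : ∀ d ∈ D, ↑(G d) ⊆ W ∧ d ≤ (G d).sup id := by
      intro d hd
      have hdJ : d ∈ genIdeal W := hDW hd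
      have := hdJ.choose_spec
      rw [hG]; simp only [dif_pos hdJ]
      exact this
    set W' : Set A := ⋃ d ∈ D, ↑(G d) with hW'
    have hW'c : W'.Countable :=
      hDc.biUnion fun d _ => (G d).countable_toSet
    have hW'W : W' ⊆ W := by
      rintro a ha
      rw [hW', Set.mem_iUnion₂] at ha
      obtain ⟨d, hd, haG⟩ := ha
      exact (hGspec d hd).1 haG
    set u : A → Set T := fun a => if h : a ∈ W then h.choose else ∅ with hu
    have huspec : ∀ a ∈ W, u a ∈ S ∧ preT a ⊆ u a := by
      intro a ha
      have := ha.choose_spec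
      rw [hu]; simp only [dif_pos ha]
      exact this
    refine ⟨u '' W', ?_, hW'c.image u, ?_⟩
    · rintro U ⟨a, haW', rfl⟩
      exact (huspec a (hW'W haW')).1
    · apply Set.eq_univ_of_forall
      intro t
      obtain ⟨a, haW, hat⟩ := key t
      have haJ : a ∈ genIdeal W := subset_genIdeal haW
      obtain ⟨F, hFD, haF⟩ := hDgen a haJ
      have hFsup : F.sup id ∉ (t : StoneSpace A).1 :=
        fun h => hat ((t : StoneSpace A).1.lower haF h)
      have hd : ∃ d ∈ F, d ∉ (t : StoneSpace A).1 := by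
        by_contra h
        push_neg at h
        exact hFsup (finsetSup_mem_ideal _ F h)
      obtain ⟨d, hdF, hdt⟩ := hd
      have hdD : d ∈ D := hFD hdF
      have hGd := hGspec d hdD
      have hGsup : (G d).sup id ∉ (t : StoneSpace A).1 :=
        fun h => hdt ((t : StoneSpace A).1.lower hGd.2 h)
      have ha' : ∃ a' ∈ G d, a' ∉ (t : StoneSpace A).1 := by
        by_contra h
        push_neg at h
        exact hGsup (finsetSup_mem_ideal _ (G d) h)
      obtain ⟨a', ha'G, ha't⟩ := ha'
      have ha'W' : a' ∈ W' := by
        rw [hW', Set.mem_iUnion₂]; exact ⟨d, hdD, ha'G⟩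
      exact ⟨u a', ⟨a', ha'W', rfl⟩, (huspec a' (hW'W ha'W')).2 ha't⟩
end

section
/- Let {A_ξ : ξ < ω₁} be a family of countable subsets of ω₁ (viewed as subsets of a countable set via a fixed structure) and suppose 𝔟 > ℵ₁ in the following sense: every family of ℵ₁ functions ω → ω is dominated. If I = {B ∈ [ω₁]^{≤ℵ₀} : |A_ξ ∩ B| < ℵ₀ for all ξ < ω₁}, then I is a P-ideal: for any countable {B_n : n ∈ ω} ⊆ I there is B ∈ I with B_n ⊆* B for all n. -/
open Set

/-- given an `ω₁`-indexed family of countable subsets of `ω₁` and the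
hypothesis that every `ℵ₁`-sized family of functions `ω → ω` is eventually dominated
(`𝔟 > ℵ₁`), the ideal `I` of countable sets meeting every `A_ξ` finitely is a P-ideal. -/
theorem stmt10 (A : Omega1 → Set Omega1) (hA : ∀ ξ, (A ξ).Countable)
    (hb : ∀ f : Omega1 → ℕ → ℕ, ∃ g : ℕ → ℕ, ∀ ξ, ∀ᶠ n in Filter.atTop, f ξ n < g n) :
    ∀ B : ℕ → Set Omega1,
      (∀ n, (B n).Countable ∧ ∀ ξ, (A ξ ∩ B n).Finite) →
      ∃ C : Set Omega1, (C.Countable ∧ ∀ ξ, (A ξ ∩ C).Finite) ∧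
        ∀ n, (B n \ C).Finite := by
  intro B hB
  -- a point of Omega1
  have hp0 : (0 : Ordinal.{0}) < (Cardinal.aleph 1).ord := by
    have := Cardinal.ord_lt_ord.mpr (Cardinal.aleph_pos 1)
    simpa using this
  set p : Omega1 := ⟨0, hp0⟩ with hp
  -- enumerations
  have henum : ∀ n, ∃ e : ℕ → Omega1, (B n ∪ {p}) = Set.range e := fun n =>
    ((hB n).1.union (Set.countable_singleton p)).exists_eq_range ⟨p, Or.inr rfl⟩
  choose e he using henum
  -- canonical index
  set i : ℕ → Omega1 → ℕ := fun n => Function.invFun (e n) with hi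
  have hei : ∀ n, ∀ x ∈ B n, e n (i n x) = x := by
    intro n x hx
    have : x ∈ Set.range (e n) := (he n) ▸ Or.inl hx
    exact Function.invFun_eq this
  have hinj : ∀ n, Set.InjOn (i n) (B n) := by
    intro n x hx y hy hxy
    rw [← hei n x hx, ← hei n y hy, hxy]
  -- the functions to be dominated
  set f : Omega1 → ℕ → ℕ := fun ξ n => sSup (i n '' (A ξ ∩ B n)) + 1 with hf
  have hfb : ∀ ξ n, ∀ x ∈ A ξ ∩ B n, i n x < f ξ n := by
    intro ξ n x hx
    have hfin : (i n '' (A ξ ∩ B n)).Finite := ((hB n).2 ξ).image _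
    have : i n x ≤ sSup (i n '' (A ξ ∩ B n)) :=
      le_csSup hfin.bddAbove ⟨x, hx, rfl⟩
    simp only [hf]
    omega
  obtain ⟨g, hg⟩ := hb f
  refine ⟨⋃ n, {x ∈ B n | g n ≤ i n x}, ⟨?_, ?_⟩, ?_⟩
  · exact Set.countable_iUnion fun n => (hB n).1.mono (sep_subset _ _)
  · intro ξ
    obtain ⟨N, hN⟩ := (hg ξ).exists_forall_of_atTop
    have hsub : A ξ ∩ (⋃ n, {x ∈ B n | g n ≤ i n x}) ⊆
        ⋃ n ∈ Finset.range N, (A ξ ∩ B n) := by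
      rintro x ⟨hxa, hxc⟩
      obtain ⟨n, hxb, hgi⟩ := Set.mem_iUnion.mp hxc
      have hn : n < N := by
        by_contra h
        have h1 := hN n (le_of_not_gt h)
        have h2 := hfb ξ n x ⟨hxa, hxb⟩
        omega
      exact Set.mem_biUnion (Finset.mem_range.mpr hn) ⟨hxa, hxb⟩
    exact (Set.Finite.biUnion (Finset.finite_toSet _) fun n _ => (hB n).2 ξ).subset hsub
  · intro n
    have hsub : B n \ (⋃ m, {x ∈ B m | g m ≤ i m x}) ⊆ {x ∈ B n | i n x < g n} := by
      rintro x ⟨hxb, hxc⟩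
      refine ⟨hxb, ?_⟩
      by_contra h
      exact hxc (Set.mem_iUnion.mpr ⟨n, hxb, le_of_not_gt h⟩)
    have : (i n '' {x ∈ B n | i n x < g n}).Finite :=
      (Set.finite_Iio (g n)).subset (by rintro _ ⟨x, ⟨_, hx⟩, rfl⟩; exact hx)
    exact ((Set.Finite.of_finite_image this ((hinj n).mono (sep_subset _ _)))).subset hsub
end

section
/- Let f be a function with uncountable domain dom(f) ⊆ ω₁ and range in ω, let X be a first countable space with fixed decreasing neighborhood bases {B(α,n) : n ∈ ω} at each point α ∈ ω₁ ⊆ X, and suppose X has no uncountable free sequence while 𝒰 is a countably complete, non-fixed maximal filter of closed sets with every point of dom(f) identified with a point of X. If Ban(f) = {x ∈ X : {α ∈ dom f : x ∈ B(α, f(α))} is countable}, then Ban(f) is a closed subset of X. -/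
open Set

/-- `X` has an uncountable free sequence. -/
def HasUncountableFreeSeq (X : Type*) [TopologicalSpace X] : Prop :=
  ∃ x : Omega1 → X, ∀ β : Omega1,
    closure (x '' {α | α < β}) ∩ closure (x '' {α | β ≤ α}) = ∅

/-- with points of `ω₁` identified with points of a first countable space
`X` (with fixed decreasing neighborhood bases `B(α,·)`), `X` having no uncountable free
sequence, and `𝒰` a countably complete, non-fixed, maximal filter of closed sets, for any
promise `f` (with uncountable domain `D ⊆ ω₁` and values in `ω`) the set
`Ban(f) = {x | {α ∈ D : x ∈ B(α, f α)} is countable}` is closed in `X`. -/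
theorem stmt12 {X : Type*} [TopologicalSpace X] [FirstCountableTopology X]
    (𝒰 : Set (Set X))
    (hne : 𝒰.Nonempty)
    (hcl : ∀ A ∈ 𝒰, IsClosed A ∧ A.Nonempty)
    (hinter : ∀ A ∈ 𝒰, ∀ B ∈ 𝒰, A ∩ B ∈ 𝒰)
    (hsup : ∀ A ∈ 𝒰, ∀ B : Set X, IsClosed B → A ⊆ B → B ∈ 𝒰)
    (hcc : ∀ A : ℕ → Set X, (∀ n, A n ∈ 𝒰) → (⋂ n, A n) ∈ 𝒰)
    (hmax : ∀ C : Set X, IsClosed C → (∀ A ∈ 𝒰, (C ∩ A).Nonempty) → C ∈ 𝒰)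
    (hnonfixed : ⋂₀ 𝒰 = ∅)
    (hfree : ¬ HasUncountableFreeSeq X)
    (ι : Omega1 → X) (hι : Function.Injective ι)
    (B : Omega1 → ℕ → Set X)
    (hB : ∀ α n, IsOpen (B α n) ∧ ι α ∈ B α n ∧ B α (n + 1) ⊆ B α n)
    (hbase : ∀ (α : Omega1) (U : Set X), IsOpen U → ι α ∈ U → ∃ n, B α n ⊆ U)
    (D : Set Omega1) (hD : ¬ D.Countable) (f : Omega1 → ℕ) :
    IsClosed {x : X | {α : Omega1 | α ∈ D ∧ x ∈ B α (f α)}.Countable} := by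
  rw [← isOpen_compl_iff, isOpen_iff_forall_mem_open]
  intro x hx
  simp only [mem_compl_iff, mem_setOf_eq] at hx
  obtain ⟨U, hU⟩ := (nhds x).exists_antitone_basis
  have hcov : {α : Omega1 | α ∈ D ∧ x ∈ B α (f α)} ⊆
      ⋃ n, {α : Omega1 | α ∈ D ∧ U n ⊆ B α (f α)} := by
    intro α hα
    have hmem : B α (f α) ∈ nhds x := (hB α (f α)).1.mem_nhds hα.2
    obtain ⟨n, hn⟩ := hU.mem_iff.mp hmem
    exact mem_iUnion.mpr ⟨n, hα.1, hn⟩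
  have hex : ∃ n, ¬ {α : Omega1 | α ∈ D ∧ U n ⊆ B α (f α)}.Countable := by
    by_contra h
    push_neg at h
    exact hx ((countable_iUnion h).mono hcov)
  obtain ⟨n, hn⟩ := hex
  obtain ⟨V, hVU, hVopen, hxV⟩ := mem_nhds_iff.mp (hU.mem n)
  refine ⟨V, ?_, hVopen, hxV⟩
  intro y hy
  simp only [mem_compl_iff, mem_setOf_eq]
  intro hc
  have sub : {α : Omega1 | α ∈ D ∧ U n ⊆ B α (f α)} ⊆
      {α : Omega1 | α ∈ D ∧ y ∈ B α (f α)} := fun α hα => ⟨hα.1, hα.2 (hVU hy)⟩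
  exact hn (Set.Countable.mono sub hc)
end

section
/- (Finite refinement of generating sequences.) Let ⟨A^ξ_α : α < ω₁⟩ for ξ in a finite set v be ⊆*-increasing sequences of countable sets, let f be a promise (function with uncountable domain ⊆ ω₁, f(α) a finite subset of α), let B ⊆ dom f be uncountable, and let β < ω₁. Then there is a finite F̄ ⊆ β such that {α ∈ B : ∀ξ ∈ v, A^ξ_β \ F̄ ⊆ A^ξ_α \ f(α)} is uncountable. -/
open Set

lemma omega1_Iic_countable (β : Omega1) : {γ : Omega1 | γ ≤ β}.Countable := by
  have hcard : (β.val).card ≤ Cardinal.aleph0 := by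
    have h := Cardinal.lt_ord.mp β.prop
    have : (β.val).card < Order.succ Cardinal.aleph0 := by
      rwa [Cardinal.succ_aleph0]
    exact Order.lt_succ_iff.mp this
  have hIio : {γ : Omega1 | γ < β}.Countable := by
    have hmk : Cardinal.mk (Set.Iio β.val) = Cardinal.lift.{1} (β.val).card :=
      Ordinal.mk_Iio_ordinal β.val
    have hct : Countable (Set.Iio β.val) := by
      rw [← Cardinal.mk_le_aleph0_iff, hmk]
      calc Cardinal.lift.{1} (β.val).card ≤ Cardinal.lift.{1} Cardinal.aleph0 :=
            Cardinal.lift_le.mpr hcard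
        _ = Cardinal.aleph0 := Cardinal.lift_aleph0
    have : Function.Injective (fun γ : {γ : Omega1 | γ < β} =>
        (⟨γ.val.val, γ.prop⟩ : Set.Iio β.val)) := by
      intro a b hab
      simp only [Subtype.mk.injEq] at hab
      exact Subtype.ext (Subtype.ext (by have h2 : a.val.val = b.val.val := congrArg (fun x : Set.Iio β.val => x.val) hab; exact h2))
    rw [← Set.countable_coe_iff]
    exact this.countable
  have : {γ : Omega1 | γ ≤ β} ⊆ insert β {γ : Omega1 | γ < β} := by
    intro γ hγ
    have h' : γ ≤ β := hγ
    rcases h'.lt_or_eq with h | h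
    · exact Set.mem_insert_iff.mpr (Or.inr h)
    · exact Set.mem_insert_iff.mpr (Or.inl h)
  exact (hIio.insert β).mono this

/-- finite refinement of generating sequences: given finitely many
`⊆*`-increasing sequences `⟨A^ξ_α : α < ω₁⟩` of countable sets with `A^ξ_α ⊆ α`, a
promise `f`, an uncountable `B ⊆ dom f`, and `β < ω₁`, there is a finite `F̄ ⊆ β` with
`{α ∈ B : ∀ ξ ∈ v, A^ξ_β \ F̄ ⊆ A^ξ_α \ f(α)}` uncountable. -/
theorem stmt16 {ι : Type*} (v : Finset ι)
    (A : ι → Omega1 → Set Omega1)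
    (hsub : ∀ ξ α, A ξ α ⊆ {γ : Omega1 | γ < α})
    (hctble : ∀ ξ α, (A ξ α).Countable)
    (hmono : ∀ (ξ) (α β : Omega1), α < β → (A ξ α \ A ξ β).Finite)
    (D : Set Omega1) (hD : ¬ D.Countable)
    (f : Omega1 → Finset Omega1) (hf : ∀ α, ↑(f α) ⊆ {γ : Omega1 | γ < α})
    (B : Set Omega1) (hB : B ⊆ D) (hBu : ¬ B.Countable) (β : Omega1) :
    ∃ F : Finset Omega1, ↑F ⊆ {γ : Omega1 | γ < β} ∧
      ¬ {α ∈ B | ∀ ξ ∈ v, A ξ β \ ↑F ⊆ A ξ α \ ↑(f α)}.Countable := by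
  classical
  -- restrict to α > β
  set B' : Set Omega1 := {α ∈ B | β < α} with hB'
  have hB'u : ¬ B'.Countable := by
    intro h
    apply hBu
    have : B ⊆ B' ∪ {γ : Omega1 | γ ≤ β} := by
      intro α hα
      rcases le_or_gt α β with h1 | h1
      · exact Or.inr h1
      · exact Or.inl ⟨hα, h1⟩
    exact (h.union (omega1_Iic_countable β)).mono this
  -- the "error" set for each α
  set T : Omega1 → Set Omega1 :=
    fun α => ⋃ ξ ∈ v, ((A ξ β \ A ξ α) ∪ (A ξ β ∩ ↑(f α))) with hT
  have hTfin : ∀ α ∈ B', (T α).Finite := by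
    intro α hα
    apply Set.Finite.biUnion v.finite_toSet
    intro ξ _
    exact (hmono ξ β α hα.2).union ((f α).finite_toSet.inter_of_right _)
  set S : Set Omega1 := ⋃ ξ ∈ v, A ξ β with hS
  have hSc : S.Countable := Set.Countable.biUnion v.countable_toSet (fun ξ _ => hctble ξ β)
  have hTS : ∀ α, T α ⊆ S := by
    intro α
    apply Set.iUnion₂_mono
    intro ξ _
    rintro γ (⟨h1, _⟩ | ⟨h1, _⟩) <;> exact h1
  -- pigeonhole over finite subsets of S
  have hcover : B' ⊆ ⋃ t ∈ {t : Set Omega1 | t.Finite ∧ t ⊆ S}, {α ∈ B' | T α = t} := by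
    intro α hα
    exact Set.mem_biUnion ⟨hTfin α hα, hTS α⟩ ⟨hα, rfl⟩
  obtain ⟨t, ht, htu⟩ : ∃ t ∈ {t : Set Omega1 | t.Finite ∧ t ⊆ S},
      ¬ {α ∈ B' | T α = t}.Countable := by
    by_contra h
    push_neg at h
    exact hB'u (((Set.countable_setOf_finite_subset hSc).biUnion
      (fun t ht => h t ht)).mono hcover)
  refine ⟨ht.1.toFinset, ?_, ?_⟩
  · rw [Set.Finite.coe_toFinset]
    intro γ hγ
    obtain ⟨ξ, _, hγ⟩ := Set.mem_iUnion₂.mp (ht.2 hγ)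
    exact hsub ξ β hγ
  · intro h
    apply htu
    apply h.mono
    rintro α ⟨⟨hαB, hβα⟩, hα⟩
    refine ⟨hαB, ?_⟩
    intro ξ hξ γ hγ
    rw [Set.Finite.coe_toFinset] at hγ
    have hγT : γ ∉ T α := by
      rw [hα]; exact hγ.2
    have hne : γ ∉ (A ξ β \ A ξ α) ∪ (A ξ β ∩ ↑(f α)) := fun hc =>
      hγT (Set.mem_biUnion hξ hc)
    constructor
    · by_contra hc
      exact hne (Or.inl ⟨hγ.1, hc⟩)
    · intro hc
      exact hne (Or.inr ⟨hγ.1, hc⟩)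
end

section
/- Let I be a P-ideal of countable subsets of ω₁ with generating sequence ⟨A_α : α < ω₁⟩, and suppose there is no uncountable A ⊆ ω₁ with [A]^{ℵ₀} ∩ I = ∅. Then for every promise f (with dom f ⊆ ω₁ uncountable and f(α) ∈ [α]^{<ω}), the set Ban(f) = {β < ω₁ : {α ∈ dom f : β ∈ A_α \ f(α)} is countable} is countable. -/
open Set

lemma omega1_Iio_countable (α₀ : Omega1) : {α : Omega1 | α < α₀}.Countable := by
  rw [← Set.countable_coe_iff]
  have hcard : Cardinal.mk (Set.Iio α₀.val) ≤ Cardinal.aleph0 := by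
    rw [Ordinal.mk_Iio_ordinal]
    have h1 : α₀.val.card < Cardinal.aleph 1 := Cardinal.lt_ord.1 α₀.2
    have h2 : α₀.val.card ≤ Cardinal.aleph0 := by
      have h1' : α₀.val.card < Order.succ Cardinal.aleph0 := by
        rwa [Cardinal.succ_aleph0]
      exact Order.lt_succ_iff.1 h1'
    calc Cardinal.lift.{1} α₀.val.card ≤ Cardinal.lift.{1} Cardinal.aleph0 :=
          Cardinal.lift_le.2 h2
      _ = Cardinal.aleph0 := Cardinal.lift_aleph0
  have : Countable (Set.Iio α₀.val) := Cardinal.mk_le_aleph0_iff.1 hcard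
  have hinj : Function.Injective
      (fun α : {α : Omega1 | α < α₀} => (⟨α.1.1, α.2⟩ : Set.Iio α₀.val)) := by
    intro a b hab
    have h' := congrArg Subtype.val hab
    exact Subtype.ext (Subtype.ext h')
  exact hinj.countable

/-- let `I` be a P-ideal of countable subsets of `ω₁` with generating
sequence `⟨A_α⟩`, and suppose every uncountable subset of `ω₁` has an infinite member of
`I` inside it.  Then for every promise `f`, the set
`Ban(f) = {β : {α ∈ dom f | β ∈ A_α \ f(α)} is countable}` is countable. -/
theorem stmt17 (I : Set (Set Omega1))
    (hctble : ∀ S ∈ I, S.Countable)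
    (hdown : ∀ S ∈ I, ∀ T ⊆ S, T ∈ I)
    (hunion : ∀ S ∈ I, ∀ T ∈ I, S ∪ T ∈ I)
    (hmod : ∀ S ∈ I, ∀ T : Set Omega1, (S \ T).Finite → (T \ S).Finite → T ∈ I)
    (hP : ∀ S : ℕ → Set Omega1, (∀ n, S n ∈ I) → ∃ T ∈ I, ∀ n, (S n \ T).Finite)
    (A : Omega1 → Set Omega1)
    (hA : ∀ α, A α ∈ I ∧ A α ⊆ {β : Omega1 | β < α})
    (hAmono : ∀ α β : Omega1, α < β → (A α \ A β).Finite)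
    (hAcof : ∀ S ∈ I, ∃ α, S ⊆ A α)
    (hbig : ∀ S : Set Omega1, ¬ S.Countable → ∃ T ⊆ S, T ∈ I ∧ T.Infinite)
    (D : Set Omega1) (hD : ¬ D.Countable)
    (f : Omega1 → Finset Omega1) (hf : ∀ α, ↑(f α) ⊆ {γ : Omega1 | γ < α}) :
    {β : Omega1 | {α : Omega1 | α ∈ D ∧ β ∈ A α \ ↑(f α)}.Countable}.Countable := by
  by_contra h
  obtain ⟨B, hBsub, hBI, hBinf⟩ := hbig _ h
  obtain ⟨α₀, hBA⟩ := hAcof B hBI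
  have hseg : {α : Omega1 | α ≤ α₀}.Countable := by
    have : {α : Omega1 | α ≤ α₀} ⊆ {α : Omega1 | α < α₀} ∪ {α₀} := by
      intro α hα
      simp only [Set.mem_setOf_eq] at hα
      rcases hα.lt_or_eq with h' | h'
      · exact Or.inl h'
      · exact Or.inr (by simp [h'])
    exact ((omega1_Iio_countable α₀).union (Set.countable_singleton _)).mono this
  have hE : ¬ {α : Omega1 | α ∈ D ∧ α₀ < α}.Countable := by
    intro hc
    apply hD
    have hsub : D ⊆ {α : Omega1 | α ∈ D ∧ α₀ < α} ∪ {α : Omega1 | α ≤ α₀} := by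
      intro α hα
      by_cases hlt : α₀ < α
      · exact Or.inl ⟨hα, hlt⟩
      · exact Or.inr (not_lt.1 hlt)
    exact (hc.union hseg).mono hsub
  apply hE
  have hcover : {α : Omega1 | α ∈ D ∧ α₀ < α} ⊆
      ⋃ β ∈ B, {α : Omega1 | α ∈ D ∧ β ∈ A α \ ↑(f α)} := by
    rintro α ⟨hαD, hαgt⟩
    have hfin : (B \ A α).Finite := by
      apply (hAmono α₀ α hαgt).subset
      rintro x ⟨hx1, hx2⟩
      exact ⟨hBA hx1, hx2⟩
    have hfin2 : (B \ (A α \ ↑(f α))).Finite := by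
      apply (hfin.union (f α).finite_toSet).subset
      rintro x ⟨hx1, hx2⟩
      by_cases hxA : x ∈ A α
      · right
        by_contra hxf
        exact hx2 ⟨hxA, hxf⟩
      · exact Or.inl ⟨hx1, hxA⟩
    obtain ⟨β, hβ⟩ := (hBinf.diff hfin2).nonempty
    have hβB : β ∈ B := hβ.1
    have hβm : β ∈ A α \ ↑(f α) := by
      by_contra hc
      exact hβ.2 ⟨hβB, hc⟩
    simp only [Set.mem_iUnion]
    exact ⟨β, hβB, hαD, hβm⟩
  exact ((hctble B hBI).biUnion (fun β hβ => hBsub hβ)).mono hcover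
end

section
/- Let X be a countably compact, non-compact T₃ space, 𝒰 a maximal filter of closed subsets of X that is not fixed. Then 𝒰 is countably complete. -/
open Set

lemma aux18 {X : Type*} [TopologicalSpace X]
    (hcc : ∀ U : ℕ → Set X, (∀ n, IsOpen (U n)) → (⋃ n, U n) = Set.univ →
      ∃ F : Finset ℕ, (⋃ n ∈ F, U n) = Set.univ)
    (C : ℕ → Set X) (hcl : ∀ n, IsClosed (C n))
    (hmono : ∀ n, C (n + 1) ⊆ C n)
    (hnonempty : ∀ n, (C n).Nonempty) :
    (⋂ n, C n).Nonempty := by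
  have hanti : ∀ n m, n ≤ m → C m ⊆ C n := by
    intro n m h
    induction h with
    | refl => exact subset_rfl
    | step h ih => exact (hmono _).trans ih
  by_contra h
  rw [Set.not_nonempty_iff_eq_empty] at h
  have hcov : (⋃ n, (C n)ᶜ) = Set.univ := by
    rw [← Set.compl_iInter, h, Set.compl_empty]
  obtain ⟨F, hF⟩ := hcc _ (fun n => (hcl n).isOpen_compl) hcov
  obtain ⟨x, hx⟩ := hnonempty (F.sup id)
  have : x ∈ ⋃ n ∈ F, (C n)ᶜ := hF ▸ Set.mem_univ x
  simp only [Set.mem_iUnion, Set.mem_compl_iff] at this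
  obtain ⟨n, hnF, hxn⟩ := this
  exact hxn (hanti n (F.sup id) (Finset.le_sup (f := id) hnF) hx)

/-- if `X` is a countably compact, non-compact T₃ space and `𝒰` is a
maximal non-fixed filter of (nonempty) closed subsets of `X`, then `𝒰` is countably
complete: the intersection of countably many members of `𝒰` is again a member. -/
theorem stmt18 {X : Type*} [TopologicalSpace X] [T3Space X]
    (hcc : ∀ U : ℕ → Set X, (∀ n, IsOpen (U n)) → (⋃ n, U n) = Set.univ →
      ∃ F : Finset ℕ, (⋃ n ∈ F, U n) = Set.univ)
    (hnc : ¬ CompactSpace X)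
    (𝒰 : Set (Set X))
    (hne : 𝒰.Nonempty)
    (hclosed : ∀ A ∈ 𝒰, IsClosed A ∧ A.Nonempty)
    (hinter : ∀ A ∈ 𝒰, ∀ B ∈ 𝒰, A ∩ B ∈ 𝒰)
    (hsup : ∀ A ∈ 𝒰, ∀ B : Set X, IsClosed B → A ⊆ B → B ∈ 𝒰)
    (hmax : ∀ C : Set X, IsClosed C → (∀ A ∈ 𝒰, (C ∩ A).Nonempty) → C ∈ 𝒰)
    (hnonfixed : ⋂₀ 𝒰 = ∅) :
    ∀ A : ℕ → Set X, (∀ n, A n ∈ 𝒰) → (⋂ n, A n) ∈ 𝒰 := by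
  intro A hA
  -- partial intersections
  set B : ℕ → Set X := fun n => Nat.rec (A 0) (fun k Bk => Bk ∩ A (k + 1)) n with hB
  have hBmem : ∀ n, B n ∈ 𝒰 := by
    intro n
    induction n with
    | zero => exact hA 0
    | succ k ih => exact hinter _ ih _ (hA (k + 1))
  have hBstep : ∀ n, B (n + 1) ⊆ B n := fun n => Set.inter_subset_left
  have hBsubA : ∀ n, B n ⊆ A n := by
    intro n
    cases n with
    | zero => exact subset_rfl
    | succ k => exact Set.inter_subset_right
  have hAsubB : ∀ n, (⋂ m, A m) ⊆ B n := by
    intro n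
    induction n with
    | zero => exact Set.iInter_subset A 0
    | succ k ih => exact Set.subset_inter ih (Set.iInter_subset A (k + 1))
  have hBA : (⋂ n, B n) = ⋂ n, A n := by
    apply Set.Subset.antisymm
    · exact Set.iInter_mono hBsubA
    · exact Set.subset_iInter hAsubB
  have hclA : IsClosed (⋂ n, A n) :=
    isClosed_iInter fun n => (hclosed _ (hA n)).1
  apply hmax _ hclA
  intro C hC
  have hkey : ((⋂ n, B n) ∩ C).Nonempty := by
    have := aux18 hcc (fun n => B n ∩ C)
      (fun n => ((hclosed _ (hBmem n)).1).inter (hclosed _ hC).1)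
      (fun n => Set.inter_subset_inter_left _ (hBstep n))
      (fun n => (hclosed _ (hinter _ (hBmem n) _ hC)).2)
    rwa [← Set.iInter_inter] at this
  rwa [hBA] at hkey
end
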